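/- Let G be a group and k a field. Let 0 → V₁ → V₂ → V₃ → 0 be a short exact sequence of k-linear G-representations, and let 𝓜 be a collection of pairs (H,φ) of subgroups H ≤ G with characters φ : H → kˣ, closed under replacing H by any smaller subgroup in the collection (intersections). If V₂ is spanned by the union of the subspaces V₂^{(H,φ)} over (H,φ) ∈ 𝓜, then V₃ is spanned by the union of V₃^{(H,φ)} over (H,φ) ∈ 𝓜, and V₁ is spanned by the union of V₁^{(H,φ)} over (H,φ) ∈ 𝓜. -/

import Mathlib

/-!
Equivariant maps send `V^{(H,φ)}` into `V^{(H,φ)}`, which settles `V₃`. For `V₁`, write `i x` as a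
finite sum of eigenvectors for pairs of `𝓜`; restricting to the intersection `K` of their
subgroups, which closure of `𝓜` allows, they become eigenvectors for characters `ψ` of one
subgroup `K` with `(K, ψ) ∈ 𝓜`. Such eigenspaces are independent (Dedekind's lemma), so since
`j (i x) = 0` each summand lies in `ker j = range i`, and its preimage is again an eigenvector.
-/

/-- The `(H,φ)`-isotypic subspace `V^{(H,φ)} = {v | h·v = φ(h)v for all h ∈ H}`. -/
def eigSubspace {k G V : Type*} [Field k] [Group G] [AddCommGroup V] [Module k V]
    (ρ : Representation k G V) (H : Subgroup G) (φ : H →* kˣ) : Submodule k V where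
  carrier := {v | ∀ h : H, ρ h v = (φ h : k) • v}
  add_mem' := by
    intro a b ha hb h
    simp [map_add, ha h, hb h, smul_add]
  zero_mem' := by intro h; simp
  smul_mem' := by
    intro c v hv h
    rw [map_smul, hv h, smul_comm]

abbrev SubgroupChar (k G : Type*) [Field k] [Group G] := Σ H : Subgroup G, (H →* kˣ)

namespace SubgroupChar

variable {k G : Type*} [Field k] [Group G]

def restrict (p : SubgroupChar k G) (K : Subgroup G) : SubgroupChar k G :=
  ⟨p.1 ⊓ K, p.2.comp (Subgroup.inclusion inf_le_left)⟩

theorem mk_comp_inclusion_congr {H K L : Subgroup G} (φ : H →* kˣ) (hKL : K = L)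
    (hK : K ≤ H) (hL : L ≤ H) :
    (⟨K, φ.comp (Subgroup.inclusion hK)⟩ : SubgroupChar k G) =
      ⟨L, φ.comp (Subgroup.inclusion hL)⟩ := by
  subst hKL
  rfl

theorem restrict_top (p : SubgroupChar k G) : p.restrict ⊤ = p :=
  mk_comp_inclusion_congr p.2 (inf_top_eq _) _ le_rfl

theorem restrict_restrict (p : SubgroupChar k G) (K L : Subgroup G) :
    (p.restrict K).restrict L = p.restrict (K ⊓ L) :=
  mk_comp_inclusion_congr p.2 (inf_assoc _ _ _) (inf_le_left.trans inf_le_left) _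

theorem restrict_of_le (p : SubgroupChar k G) {K : Subgroup G} (hK : K ≤ p.1) :
    p.restrict K = ⟨K, p.2.comp (Subgroup.inclusion hK)⟩ :=
  mk_comp_inclusion_congr p.2 (inf_eq_right.2 hK) _ _

def restrictStable (𝓜 : Set (SubgroupChar k G)) : Set (Subgroup G) :=
  {K | ∀ p ∈ 𝓜, p.restrict K ∈ 𝓜}

variable {𝓜 : Set (SubgroupChar k G)}

theorem top_mem_restrictStable : ⊤ ∈ restrictStable 𝓜 := fun p hp => by
  rwa [restrict_top]

theorem inf_mem_restrictStable {K L : Subgroup G} (hK : K ∈ restrictStable 𝓜)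
    (hL : L ∈ restrictStable 𝓜) : K ⊓ L ∈ restrictStable 𝓜 := fun p hp => by
  rw [← restrict_restrict]
  exact hL _ (hK p hp)

theorem fst_mem_restrictStable (hclosed : ∀ p ∈ 𝓜, ∀ q ∈ 𝓜, p.restrict q.1 ∈ 𝓜)
    {q : SubgroupChar k G} (hq : q ∈ 𝓜) : q.1 ∈ restrictStable 𝓜 :=
  fun p hp => hclosed p hp q hq

end SubgroupChar

open SubgroupChar

section eigSubspace

variable {k G V W : Type*} [Field k] [Group G] [AddCommGroup V] [Module k V]
  [AddCommGroup W] [Module k W] (ρ : Representation k G V)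

theorem eigSubspace_le_restrict {H K : Subgroup G} (hKH : K ≤ H) (φ : H →* kˣ) :
    eigSubspace ρ H φ ≤ eigSubspace ρ K (φ.comp (Subgroup.inclusion hKH)) :=
  fun _ hv h => hv (Subgroup.inclusion hKH h)

/-- Under any linear form, a vanishing sum of simultaneous eigenvectors becomes a vanishing linear
combination of characters of `H`, which is trivial by Dedekind's lemma. -/
theorem iSupIndep_eigSubspace (H : Subgroup G) : iSupIndep (eigSubspace ρ H) := by
  rw [iSupIndep_iff_finsetSum_eq_zero_imp_eq_zero]
  intro s v hv hsum φ hφ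
  have hdedekind : LinearIndependent k fun ψ : H →* kˣ => fun h => ((ψ h : kˣ) : k) :=
    (linearIndependent_monoidHom H k).comp (fun ψ => (Units.coeHom k).comp ψ)
      fun ψ₁ ψ₂ h => MonoidHom.ext fun x => Units.ext (DFunLike.congr_fun h x)
  refine (Module.forall_dual_apply_eq_zero_iff k (v φ)).1 fun ℓ => ?_
  refine linearIndependent_iff'.1 hdedekind s (fun ψ => ℓ (v ψ)) ?_ φ hφ
  funext h
  simp only [Finset.sum_apply, Pi.smul_apply, smul_eq_mul, Pi.zero_apply]
  calc ∑ ψ ∈ s, ℓ (v ψ) * ((ψ h : kˣ) : k)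
      = ℓ (∑ ψ ∈ s, ρ h (v ψ)) := by
        rw [map_sum]
        exact Finset.sum_congr rfl fun ψ hψ => by rw [hv ψ hψ h, map_smul, smul_eq_mul, mul_comm]
    _ = 0 := by rw [← map_sum, hsum, map_zero, map_zero]

variable {ρ} {σ : Representation k G W} {f : V →ₗ[k] W}

theorem eigSubspace_le_comap (hf : ∀ g v, f (ρ g v) = σ g (f v)) (H : Subgroup G)
    (φ : H →* kˣ) : eigSubspace ρ H φ ≤ (eigSubspace σ H φ).comap f := fun v hv h => by
  rw [← hf, hv h, map_smul]

theorem comap_eigSubspace_le (hinj : Function.Injective f)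
    (hf : ∀ g v, f (ρ g v) = σ g (f v)) (H : Subgroup G) (φ : H →* kˣ) :
    (eigSubspace σ H φ).comap f ≤ eigSubspace ρ H φ := fun v hv h =>
  hinj <| by rw [hf, hv h, map_smul]

end eigSubspace

theorem Submodule.ker_inf_iSup_le_of_iSupIndep {R M N ι : Type*} [Ring R] [AddCommGroup M]
    [Module R M] [AddCommGroup N] [Module R N] {P : ι → Submodule R M} {Q : ι → Submodule R N}
    (hQ : iSupIndep Q) {f : M →ₗ[R] N} (hPQ : ∀ a, P a ≤ (Q a).comap f) :
    LinearMap.ker f ⊓ ⨆ a, P a ≤ ⨆ a, LinearMap.ker f ⊓ P a := by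
  rintro x ⟨hx, hxP⟩
  obtain ⟨c, hc, rfl⟩ := (Submodule.mem_iSup_iff_exists_finsupp P x).1 hxP
  have hfc : ∀ a ∈ c.support, f (c a) = 0 := by
    refine (iSupIndep_iff_finsetSum_eq_zero_imp_eq_zero Q).1 hQ c.support (fun a => f (c a))
      (fun a _ => hPQ a (hc a)) ?_
    rwa [← map_sum]
  exact Submodule.sum_mem _ fun a ha => Submodule.mem_iSup_of_mem a ⟨hfc a ha, hc a⟩

theorem Submodule.comap_iSup_le_of_exact {R M₁ M₂ M₃ ι : Type*} [Ring R] [AddCommGroup M₁]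
    [Module R M₁] [AddCommGroup M₂] [Module R M₂] [AddCommGroup M₃] [Module R M₃]
    {P₁ : ι → Submodule R M₁} {P₂ : ι → Submodule R M₂} {P₃ : ι → Submodule R M₃}
    {i : M₁ →ₗ[R] M₂} {j : M₂ →ₗ[R] M₃} (hi : Function.Injective i)
    (hexact : LinearMap.range i = LinearMap.ker j) (hP₃ : iSupIndep P₃)
    (hP₁₂ : ∀ a, (P₂ a).comap i ≤ P₁ a) (hP₂₃ : ∀ a, P₂ a ≤ (P₃ a).comap j) :
    (⨆ a, P₂ a).comap i ≤ ⨆ a, P₁ a := by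
  intro x hx
  have hsplit : ⨆ a, LinearMap.ker j ⊓ P₂ a ≤ (⨆ a, P₁ a).map i := by
    rw [Submodule.map_iSup, ← hexact]
    exact iSup_mono fun a =>
      (Submodule.map_comap_eq i (P₂ a)).ge.trans (Submodule.map_mono (hP₁₂ a))
  have hker : i x ∈ LinearMap.ker j ⊓ ⨆ a, P₂ a := ⟨hexact ▸ LinearMap.mem_range_self i x, hx⟩
  exact (Submodule.comap_map_eq_of_injective hi _).le <|
    hsplit <| Submodule.ker_inf_iSup_le_of_iSupIndep hP₃ hP₂₃ hker

section smoothPart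

variable {k G V W : Type*} [Field k] [Group G] [AddCommGroup V] [Module k V]
  [AddCommGroup W] [Module k W] (ρ : Representation k G V) (𝓜 : Set (SubgroupChar k G))

def smoothPart (K : Subgroup G) : Submodule k V :=
  ⨆ ψ : {ψ : K →* kˣ // (⟨K, ψ⟩ : SubgroupChar k G) ∈ 𝓜}, eigSubspace ρ K ψ

theorem smoothPart_le_iSup (K : Subgroup G) :
    smoothPart ρ 𝓜 K ≤ ⨆ p ∈ 𝓜, eigSubspace ρ p.1 p.2 :=
  iSup_le fun ψ => le_biSup (fun p : SubgroupChar k G => eigSubspace ρ p.1 p.2) ψ.2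

theorem eigSubspace_le_smoothPart {p : SubgroupChar k G} (hp : p ∈ 𝓜) :
    eigSubspace ρ p.1 p.2 ≤ smoothPart ρ 𝓜 p.1 :=
  le_iSup_of_le ⟨p.2, hp⟩ le_rfl

variable {𝓜}

theorem smoothPart_anti {K L : Subgroup G} (hL : L ∈ restrictStable 𝓜) (hLK : L ≤ K) :
    smoothPart ρ 𝓜 K ≤ smoothPart ρ 𝓜 L := iSup_le fun ψ =>
  have hψL : (⟨L, ψ.1.comp (Subgroup.inclusion hLK)⟩ : SubgroupChar k G) ∈ 𝓜 := by
    rw [← restrict_of_le ⟨K, ψ.1⟩ hLK]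
    exact hL _ ψ.2
  (eigSubspace_le_restrict ρ hLK ψ.1).trans (le_iSup_of_le ⟨_, hψL⟩ le_rfl)

/-- Since the restriction-stable subgroups are closed under `⊓`, the `smoothPart`s form a
directed family, so a finite sum of eigenvectors for pairs of `𝓜` lies in a single one. -/
theorem exists_mem_smoothPart (hclosed : ∀ p ∈ 𝓜, ∀ q ∈ 𝓜, p.restrict q.1 ∈ 𝓜) {x : V}
    (hx : x ∈ ⨆ p ∈ 𝓜, eigSubspace ρ p.1 p.2) : ∃ K, x ∈ smoothPart ρ 𝓜 K := by
  have : Nonempty (restrictStable 𝓜) := ⟨⟨⊤, top_mem_restrictStable⟩⟩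
  have hdir : Directed (· ≤ ·) fun K : restrictStable 𝓜 => smoothPart ρ 𝓜 K :=
    fun K L => ⟨⟨K ⊓ L, inf_mem_restrictStable K.2 L.2⟩,
      smoothPart_anti ρ (inf_mem_restrictStable K.2 L.2) inf_le_left,
      smoothPart_anti ρ (inf_mem_restrictStable K.2 L.2) inf_le_right⟩
  have hle : ⨆ p ∈ 𝓜, eigSubspace ρ p.1 p.2 ≤ ⨆ K : restrictStable 𝓜, smoothPart ρ 𝓜 K :=
    iSup₂_le fun p hp => (eigSubspace_le_smoothPart ρ 𝓜 hp).trans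
      (le_iSup_of_le ⟨p.1, fst_mem_restrictStable hclosed hp⟩ le_rfl)
  obtain ⟨K, hK⟩ := (Submodule.mem_iSup_of_directed _ hdir).1 (hle hx)
  exact ⟨K, hK⟩

variable {ρ} {σ : Representation k G W} {f : V →ₗ[k] W}

theorem map_iSup_eigSubspace_le (hf : ∀ g v, f (ρ g v) = σ g (f v)) :
    (⨆ p ∈ 𝓜, eigSubspace ρ p.1 p.2).map f ≤ ⨆ p ∈ 𝓜, eigSubspace σ p.1 p.2 := by
  rw [Submodule.map_le_iff_le_comap]
  exact iSup₂_le fun p hp => (eigSubspace_le_comap hf p.1 p.2).trans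
    (Submodule.comap_mono (le_biSup (fun p : SubgroupChar k G => eigSubspace σ p.1 p.2) hp))

theorem comap_smoothPart_le {V₁ V₂ V₃ : Type*} [AddCommGroup V₁] [Module k V₁]
    [AddCommGroup V₂] [Module k V₂] [AddCommGroup V₃] [Module k V₃]
    {ρ₁ : Representation k G V₁} {ρ₂ : Representation k G V₂} {ρ₃ : Representation k G V₃}
    {i : V₁ →ₗ[k] V₂} {j : V₂ →ₗ[k] V₃} (hi : Function.Injective i)
    (hexact : LinearMap.range i = LinearMap.ker j)
    (hiequiv : ∀ g v, i (ρ₁ g v) = ρ₂ g (i v)) (hjequiv : ∀ g v, j (ρ₂ g v) = ρ₃ g (j v))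
    (K : Subgroup G) : (smoothPart ρ₂ 𝓜 K).comap i ≤ smoothPart ρ₁ 𝓜 K :=
  Submodule.comap_iSup_le_of_exact hi hexact
    ((iSupIndep_eigSubspace ρ₃ K).comp Subtype.val_injective)
    (fun ψ => comap_eigSubspace_le hi hiequiv K ψ) (fun ψ => eigSubspace_le_comap hjequiv K ψ)

end smoothPart

theorem stmt6 {k G : Type*} [Field k] [Group G]
    {V₁ V₂ V₃ : Type*} [AddCommGroup V₁] [Module k V₁] [AddCommGroup V₂] [Module k V₂]
    [AddCommGroup V₃] [Module k V₃]
    (ρ₁ : Representation k G V₁) (ρ₂ : Representation k G V₂) (ρ₃ : Representation k G V₃)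
    (i : V₁ →ₗ[k] V₂) (j : V₂ →ₗ[k] V₃)
    (hi : Function.Injective i) (hj : Function.Surjective j)
    (hexact : LinearMap.range i = LinearMap.ker j)
    (hiequiv : ∀ (g : G) (v : V₁), i (ρ₁ g v) = ρ₂ g (i v))
    (hjequiv : ∀ (g : G) (v : V₂), j (ρ₂ g v) = ρ₃ g (j v))
    (𝓜 : Set (Σ H : Subgroup G, (↥H →* kˣ)))
    (hclosed : ∀ p ∈ 𝓜, ∀ q ∈ 𝓜,
      (⟨p.1 ⊓ q.1, p.2.comp (Subgroup.inclusion inf_le_left)⟩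
        : Σ H : Subgroup G, (↥H →* kˣ)) ∈ 𝓜 ∧
      (⟨p.1 ⊓ q.1, q.2.comp (Subgroup.inclusion inf_le_right)⟩
        : Σ H : Subgroup G, (↥H →* kˣ)) ∈ 𝓜)
    (hsmooth : (⨆ p ∈ 𝓜, eigSubspace ρ₂ p.1 p.2) = ⊤) :
    (⨆ p ∈ 𝓜, eigSubspace ρ₃ p.1 p.2) = ⊤ ∧
    (⨆ p ∈ 𝓜, eigSubspace ρ₁ p.1 p.2) = ⊤ := by
  refine ⟨?_, ?_⟩
  · rw [eq_top_iff, ← LinearMap.range_eq_top.2 hj, LinearMap.range_eq_map, ← hsmooth]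
    exact map_iSup_eigSubspace_le hjequiv
  · rw [eq_top_iff]
    rintro x -
    have hix : i x ∈ ⨆ p ∈ 𝓜, eigSubspace ρ₂ p.1 p.2 := hsmooth ▸ Submodule.mem_top
    obtain ⟨K, hK⟩ :=
      exists_mem_smoothPart ρ₂ (fun p hp q hq => (hclosed p hp q hq).1) hix
    exact smoothPart_le_iSup ρ₁ 𝓜 K (comap_smoothPart_le hi hexact hiequiv hjequiv K hK)
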